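/- For s ≤ ⌊n/3⌋ + 1, the number of generally admissible paths of size (n,s) that cross both the line x=0 and the line x=n+2−2s equals binomial(n, s−4). -/

import Mathlib

open Finset
open scoped Classical
noncomputable section

/-- Position (x-coordinate) after `t` steps of the path `p`, where `true` encodes a
right step `(x,y) ↦ (x+1,y+1)` and `false` a left step `(x,y) ↦ (x-1,y+1)`. -/
def pathPos {m : ℕ} (p : Fin m → Bool) (t : ℕ) : ℤ :=
  ∑ j : Fin m, if (j : ℕ) < t then (if p j then (1 : ℤ) else -1) else 0

/-- Generally admissible paths of size `(n,s)`: `n+2` diagonal steps starting at `(0,0)`,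
the 0-th and the last step going right, with exactly `s` left steps
(hence ending at `(n+2-2s, n+2)`). -/
def admissible (n s : ℕ) : Finset (Fin (n + 2) → Bool) :=
  Finset.univ.filter (fun p =>
    (∀ j : Fin (n + 2), (j : ℕ) = 0 → p j = true) ∧
    (∀ j : Fin (n + 2), (j : ℕ) = n + 1 → p j = true) ∧
    (Finset.univ.filter (fun j => p j = false)).card = s)

/-- The path crosses the line `x = 0`, i.e. reaches x-coordinate `-1` at some time. -/
def crossesLeft {m : ℕ} (p : Fin m → Bool) : Prop :=
  ∃ t ∈ Finset.range (m + 1), pathPos p t = -1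

/-- A path of size `(n,s)` crosses the line `x = n+2-2s`,
i.e. reaches x-coordinate `n+3-2s` at some time. -/
def crossesRight (n s : ℕ) (p : Fin (n + 2) → Bool) : Prop :=
  ∃ t ∈ Finset.range (n + 3), pathPos p t = (n : ℤ) + 3 - 2 * s

/-- `L n s`: the number of generally admissible paths of size `(n,s)`
crossing the line `x = 0`. -/
def L (n s : ℕ) : ℕ := ((admissible n s).filter (fun p => crossesLeft p)).card

/-- Constrained lattice paths: `n+2` diagonal steps from `(0,0)` to `(n+2-2s, n+2)`,
staying inside the strip `0 ≤ x ≤ n+2-2s`.  (`n` is allowed to be a negative integer,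
with the convention that there are `max (n+2) 0` steps.) -/
def aPaths (n : ℤ) (s : ℕ) : Finset (Fin (n + 2).toNat → Bool) :=
  Finset.univ.filter (fun p =>
    pathPos p (n + 2).toNat = n + 2 - 2 * s ∧
    ∀ t ∈ Finset.range ((n + 2).toNat + 1),
      0 ≤ pathPos p t ∧ pathPos p t ≤ n + 2 - 2 * s)

/-- `a n s`: the number of lattice paths from `(0,0)` to `(n+2-2s, n+2)` with steps
`(x,y) ↦ (x±1, y+1)` staying inside the strip `0 ≤ x ≤ n+2-2s`. -/
def a (n : ℤ) (s : ℕ) : ℕ := (aPaths n s).card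

/-- Binomial coefficient `C(n,k)` with integer lower index, zero when `k < 0`. -/
def binom (n : ℕ) (k : ℤ) : ℕ := if k < 0 then 0 else n.choose k.toNat

/-- `b W H`: the number of lattice paths from `(0,0)` to `(W,H)` with steps
`(x,y) ↦ (x±1,y+1)` staying in the strip `0 ≤ x ≤ W`, whose first and last steps go
right, and whose intermediate steps come in consecutive same-direction pairs
`(1,2), (3,4), …, (H-3,H-2)`. -/
def bPaths (W H : ℕ) : Finset (Fin H → Bool) :=
  Finset.univ.filter (fun p =>
    (∀ j : Fin H, (j : ℕ) = 0 → p j = true) ∧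
    (∀ j : Fin H, (j : ℕ) = H - 1 → p j = true) ∧
    (∀ j1 j2 : Fin H, (j1 : ℕ) % 2 = 1 → (j2 : ℕ) = (j1 : ℕ) + 1 →
      (j1 : ℕ) + 1 ≤ H - 2 → p j1 = p j2) ∧
    pathPos p H = (W : ℤ) ∧
    ∀ t ∈ Finset.range (H + 1), 0 ≤ pathPos p t ∧ pathPos p t ≤ (W : ℤ))

def b (W H : ℕ) : ℕ := (bPaths W H).card


/-!
Reflection principle. For a path crossing both lines, reflect the stretch between its first
visit to `x = -1` and its first visit to `x = n + 3 - 2s` about `x = -1`. Since `3s ≤ n + 3`,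
the visit to `-1` comes first (descending from `n + 3 - 2s` to `-1` would take more than `s`
left steps), and the result is a path with first and last steps right that ends at
`2s - n - 6`, i.e. has `n + 4 - s` left steps. Conversely every such path visits `-1` and then
`2s - n - 5`, and never climbs above `s - 2 < n + 3 - 2s`, so the same reflection inverts the
map. Hence the count is `C(n, n + 4 - s) = C(n, s - 4)`.
-/

section Walk

variable {m : ℕ} (p : Fin m → Bool)

lemma pathPos_zero : pathPos p 0 = 0 := by
  simp [pathPos]

lemma pathPos_of_le {t : ℕ} (ht : m ≤ t) : pathPos p t = pathPos p m := by
  unfold pathPos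
  refine sum_congr rfl fun j _ => ?_
  simp [j.2, j.2.trans_le ht]

lemma pathPos_sub_pathPos {u v : ℕ} (huv : u ≤ v) :
    pathPos p v - pathPos p u =
      ∑ j : Fin m, if u ≤ (j : ℕ) ∧ (j : ℕ) < v then (if p j then 1 else -1) else 0 := by
  unfold pathPos
  rw [← sum_sub_distrib]
  refine sum_congr rfl fun j _ => ?_
  split_ifs <;> omega

lemma pathPos_succ {t : ℕ} (ht : t < m) :
    pathPos p (t + 1) = pathPos p t + if p ⟨t, ht⟩ then 1 else -1 := by
  rw [← sub_eq_iff_eq_add', pathPos_sub_pathPos p t.le_succ,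
    Fintype.sum_eq_single ⟨t, ht⟩ fun j hj => if_neg fun h => hj (Fin.ext (by simp; omega))]
  simp

lemma pathPos_le_pathPos_succ_add_one (t : ℕ) : pathPos p t ≤ pathPos p (t + 1) + 1 := by
  by_cases ht : t < m
  · rw [pathPos_succ p ht]
    split_ifs <;> omega
  · rw [pathPos_of_le p (not_lt.1 ht), pathPos_of_le p (by omega : m ≤ t + 1)]
    omega

lemma pathPos_sub_pathPos_le_card_false {u v : ℕ} (huv : u ≤ v) :
    pathPos p u - pathPos p v ≤ #(univ.filter fun j => p j = false) := by
  rw [← neg_sub, pathPos_sub_pathPos p huv, ← sum_neg_distrib, natCast_card_filter]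
  refine sum_le_sum fun j _ => ?_
  split_ifs <;> simp_all

lemma pathPos_length : pathPos p m = m - 2 * #(univ.filter fun j => p j = false) := by
  have hm : (m : ℤ) = ∑ _j : Fin m, 1 := by simp
  rw [pathPos, natCast_card_filter, hm, mul_sum, ← sum_sub_distrib]
  refine sum_congr rfl fun j _ => ?_
  cases p j <;> simp

end Walk

section FirstHit

variable {m : ℕ} (p : Fin m → Bool)

lemma exists_mem_range_pathPos_eq_iff {c : ℤ} :
    (∃ t ∈ range (m + 1), pathPos p t = c) ↔ ∃ t, pathPos p t = c := by
  refine ⟨fun ⟨t, _, ht⟩ => ⟨t, ht⟩, fun ⟨t, ht⟩ => ?_⟩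
  by_cases htm : t ≤ m
  · exact ⟨t, mem_range.2 (by omega), ht⟩
  · exact ⟨m, mem_range.2 (by omega), pathPos_of_le p (t := t) (by omega) ▸ ht⟩

lemma exists_le_pathPos_eq {c : ℤ} (hc : c ≤ 0) {v : ℕ} (hv : pathPos p v ≤ c) :
    ∃ t ≤ v, pathPos p t = c := by
  induction v with
  | zero => exact ⟨0, le_rfl, le_antisymm hv (pathPos_zero p ▸ hc)⟩
  | succ v ih =>
    by_cases hv' : pathPos p v ≤ c
    · obtain ⟨t, htv, ht⟩ := ih hv'
      exact ⟨t, htv.trans v.le_succ, ht⟩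
    · have := pathPos_le_pathPos_succ_add_one p v
      exact ⟨v + 1, le_rfl, by omega⟩

/-- Junk value `0` when the walk never visits `c`. -/
def firstHit (c : ℤ) : ℕ := sInf {t | pathPos p t = c}

variable {p} {c : ℤ}

lemma pathPos_firstHit (hc : ∃ t, pathPos p t = c) : pathPos p (firstHit p c) = c :=
  Nat.sInf_mem hc

lemma firstHit_le {t : ℕ} (ht : pathPos p t = c) : firstHit p c ≤ t :=
  Nat.sInf_le ht

lemma pathPos_ne_of_lt_firstHit {t : ℕ} (ht : t < firstHit p c) : pathPos p t ≠ c :=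
  Nat.notMem_of_lt_sInf ht

lemma firstHit_eq {t : ℕ} (ht : pathPos p t = c) (hbefore : ∀ u < t, pathPos p u ≠ c) :
    firstHit p c = t :=
  (firstHit_le ht).antisymm (not_lt.1 fun h => hbefore _ h (pathPos_firstHit ⟨t, ht⟩))

lemma firstHit_le_length (hc : ∃ t, pathPos p t = c) : firstHit p c ≤ m := by
  obtain ⟨t, ht⟩ := hc
  by_cases htm : t ≤ m
  · exact (firstHit_le ht).trans htm
  · exact firstHit_le (pathPos_of_le p (t := t) (by omega) ▸ ht)

lemma firstHit_le_of_pathPos_le (hc : c ≤ 0) {v : ℕ} (hv : pathPos p v ≤ c) :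
    firstHit p c ≤ v := by
  obtain ⟨t, htv, ht⟩ := exists_le_pathPos_eq p hc hv
  exact (firstHit_le ht).trans htv

lemma nonneg_of_lt_firstHit_neg_one {t : ℕ} (ht : t < firstHit p (-1)) : 0 ≤ pathPos p t := by
  by_contra! h
  exact absurd (firstHit_le_of_pathPos_le (by norm_num) (by omega : pathPos p t ≤ -1)) (by omega)

end FirstHit

section Reflection

variable {m : ℕ} (p : Fin m → Bool)

def flipBetween (a b : ℕ) : Fin m → Bool :=
  fun j => if a ≤ (j : ℕ) ∧ (j : ℕ) < b then !p j else p j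

lemma flipBetween_flipBetween (a b : ℕ) : flipBetween (flipBetween p a b) a b = p := by
  funext j
  unfold flipBetween
  split_ifs <;> simp

lemma flipBetween_of_not_mem {a b : ℕ} {j : Fin m} (hj : (j : ℕ) < a ∨ b ≤ (j : ℕ)) :
    flipBetween p a b j = p j :=
  if_neg (by omega)

lemma pathPos_flipBetween {a b : ℕ} (hab : a ≤ b) (t : ℕ) :
    pathPos (flipBetween p a b) t
      = pathPos p t - 2 * (pathPos p (min t b) - pathPos p (min t a)) := by
  rw [pathPos_sub_pathPos p (min_le_min_left t hab), pathPos, pathPos, mul_sum,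
    ← sum_sub_distrib]
  refine sum_congr rfl fun j _ => ?_
  unfold flipBetween
  split_ifs <;> cases p j <;> simp_all <;> omega

variable {p} {a b t : ℕ}

lemma pathPos_flipBetween_of_le_left (hab : a ≤ b) (ht : t ≤ a) :
    pathPos (flipBetween p a b) t = pathPos p t := by
  rw [pathPos_flipBetween p hab, min_eq_left (ht.trans hab), min_eq_left ht, sub_self,
    mul_zero, sub_zero]

lemma pathPos_flipBetween_of_mem (ha : a ≤ t) (hb : t ≤ b) :
    pathPos (flipBetween p a b) t = 2 * pathPos p a - pathPos p t := by
  rw [pathPos_flipBetween p (ha.trans hb), min_eq_left hb, min_eq_right ha]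
  ring

lemma pathPos_flipBetween_of_right_le (hab : a ≤ b) (ht : b ≤ t) :
    pathPos (flipBetween p a b) t = pathPos p t - 2 * (pathPos p b - pathPos p a) := by
  rw [pathPos_flipBetween p hab, min_eq_right ht, min_eq_right (hab.trans ht)]

end Reflection

section ReflectAt

variable {m : ℕ}

/-- Reflect the walk about the level `-1` between its first visit to `-1` and its first visit
to `c`. -/
def reflectAt (p : Fin m → Bool) (c : ℤ) : Fin m → Bool :=
  flipBetween p (firstHit p (-1)) (firstHit p c)

variable {p : Fin m → Bool} {c c' : ℤ}

lemma pathPos_reflectAt_firstHit_neg_one (hL : ∃ t, pathPos p t = -1)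
    (hle : firstHit p (-1) ≤ firstHit p c) :
    pathPos (reflectAt p c) (firstHit p (-1)) = -1 := by
  rw [reflectAt, pathPos_flipBetween_of_le_left hle le_rfl, pathPos_firstHit hL]

lemma pathPos_reflectAt_firstHit (hL : ∃ t, pathPos p t = -1) (hc : ∃ t, pathPos p t = c)
    (hle : firstHit p (-1) ≤ firstHit p c) (hcc' : c + c' = -2) :
    pathPos (reflectAt p c) (firstHit p c) = c' := by
  rw [reflectAt, pathPos_flipBetween_of_mem hle le_rfl, pathPos_firstHit hL,
    pathPos_firstHit hc]
  omega

lemma firstHit_reflectAt_neg_one (hL : ∃ t, pathPos p t = -1)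
    (hle : firstHit p (-1) ≤ firstHit p c) :
    firstHit (reflectAt p c) (-1) = firstHit p (-1) := by
  refine firstHit_eq (pathPos_reflectAt_firstHit_neg_one hL hle) fun u hu => ?_
  rw [reflectAt, pathPos_flipBetween_of_le_left hle hu.le]
  exact pathPos_ne_of_lt_firstHit hu

/-- The reflected stretch first reaches `c' = -2 - c` at its end, because the original stretch
had not yet visited `c`. -/
lemma firstHit_reflectAt (hL : ∃ t, pathPos p t = -1) (hc : ∃ t, pathPos p t = c)
    (hle : firstHit p (-1) ≤ firstHit p c) (hcc' : c + c' = -2)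
    (havoid : ∀ u < firstHit p (-1), pathPos p u ≠ c') :
    firstHit (reflectAt p c) c' = firstHit p c := by
  refine firstHit_eq (pathPos_reflectAt_firstHit hL hc hle hcc') fun u hu => ?_
  rcases lt_or_ge u (firstHit p (-1)) with hu1 | hu1
  · rw [reflectAt, pathPos_flipBetween_of_le_left hle hu1.le]
    exact havoid u hu1
  · rw [reflectAt, pathPos_flipBetween_of_mem hu1 hu.le, pathPos_firstHit hL]
    have := pathPos_ne_of_lt_firstHit hu
    omega

lemma reflectAt_reflectAt (hL : ∃ t, pathPos p t = -1) (hc : ∃ t, pathPos p t = c)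
    (hle : firstHit p (-1) ≤ firstHit p c) (hcc' : c + c' = -2)
    (havoid : ∀ u < firstHit p (-1), pathPos p u ≠ c') :
    reflectAt (reflectAt p c) c' = p := by
  rw [reflectAt, firstHit_reflectAt_neg_one hL hle, firstHit_reflectAt hL hc hle hcc' havoid,
    reflectAt, flipBetween_flipBetween]

lemma pathPos_reflectAt_length (hL : ∃ t, pathPos p t = -1) (hc : ∃ t, pathPos p t = c)
    (hle : firstHit p (-1) ≤ firstHit p c) :
    pathPos (reflectAt p c) m = pathPos p m - 2 * (c + 1) := by
  rw [reflectAt, pathPos_flipBetween_of_right_le hle (firstHit_le_length hc),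
    pathPos_firstHit hL, pathPos_firstHit hc]
  ring

end ReflectAt

section Admissible

variable {n k : ℕ}

lemma mem_admissible {p : Fin (n + 2) → Bool} :
    p ∈ admissible n k ↔
      p 0 = true ∧ p (Fin.last (n + 1)) = true ∧ #(univ.filter fun j => p j = false) = k := by
  have hlast (j : Fin (n + 2)) : (j : ℕ) = n + 1 ↔ j = Fin.last (n + 1) := by simp [Fin.ext_iff]
  simp [admissible, hlast]

lemma mem_admissible_iff_pathPos {p : Fin (n + 2) → Bool} :
    p ∈ admissible n k ↔
      p 0 = true ∧ p (Fin.last (n + 1)) = true ∧ pathPos p (n + 2) = n + 2 - 2 * k := by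
  rw [mem_admissible, pathPos_length]
  refine and_congr_right fun _ => and_congr_right fun _ => ?_
  push_cast
  omega

lemma card_admissible (n k : ℕ) : #(admissible n k) = n.choose k := by
  let T : Finset (Fin (n + 2)) := (univ.erase 0).erase (Fin.last (n + 1))
  have hT : n.choose k = #(T.powersetCard k) := by simp [T, card_erase_of_mem]
  rw [hT]
  refine card_nbij' (fun p => univ.filter fun j => p j = false) (fun S j => decide (j ∉ S))
    (fun p hp => ?_) (fun S hS => ?_) (fun p _ => by simp) (fun S _ => by simp)
  · obtain ⟨h0, hlast, hcard⟩ := mem_admissible.1 hp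
    simp only [T, mem_coe, mem_powersetCard, subset_iff, mem_erase, mem_filter]
    refine ⟨fun j hj => ⟨?_, ?_, mem_univ j⟩, hcard⟩ <;> rintro rfl <;> simp_all
  · simp only [T, mem_coe, mem_powersetCard, subset_iff, mem_erase] at hS
    obtain ⟨hsub, hcard⟩ := hS
    refine mem_admissible.2 ⟨?_, ?_, by simpa using hcard⟩
    · simpa using fun h => (hsub h).2.1 rfl
    · simpa using fun h => (hsub h).1 rfl

end Admissible

section Crossing

variable {n k k' s : ℕ} {p q : Fin (n + 2) → Bool} {c : ℤ}

lemma reflectAt_mem_admissible (hp : p ∈ admissible n k) (hL : ∃ t, pathPos p t = -1)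
    (hc : ∃ t, pathPos p t = c) (hle : firstHit p (-1) ≤ firstHit p c)
    (hend : pathPos p (n + 2) ≠ c) (hk : (k' : ℤ) = k + c + 1) :
    reflectAt p c ∈ admissible n k' := by
  obtain ⟨h0, hlast, hpend⟩ := mem_admissible_iff_pathPos.1 hp
  have h1 : 0 < firstHit p (-1) := Nat.pos_of_ne_zero fun h => by
    have := pathPos_firstHit hL
    rw [h, pathPos_zero] at this
    omega
  have h2 : firstHit p c < n + 2 := (firstHit_le_length hc).lt_of_ne fun h =>
    hend (by rw [← pathPos_firstHit hc, h])
  refine mem_admissible_iff_pathPos.2 ⟨?_, ?_, ?_⟩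
  · rwa [reflectAt, flipBetween_of_not_mem p (Or.inl (by rw [Fin.val_zero]; exact h1))]
  · rwa [reflectAt, flipBetween_of_not_mem p (Or.inr (by rw [Fin.val_last]; omega))]
  · rw [pathPos_reflectAt_length hL hc hle, hpend, hk]
    ring

lemma firstHit_neg_one_le_firstHit (hs : 3 * s ≤ n + 3) (hp : p ∈ admissible n s)
    (hL : ∃ t, pathPos p t = -1) (hR : ∃ t, pathPos p t = n + 3 - 2 * s) :
    firstHit p (-1) ≤ firstHit p (n + 3 - 2 * s) := by
  by_contra! h
  have hdescent := pathPos_sub_pathPos_le_card_false p h.le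
  rw [pathPos_firstHit hL, pathPos_firstHit hR, (mem_admissible.1 hp).2.2] at hdescent
  omega

lemma reflectAt_mem_admissible_of_crossing (hs : 3 * s ≤ n + 3) (hp : p ∈ admissible n s)
    (hL : ∃ t, pathPos p t = -1) (hR : ∃ t, pathPos p t = n + 3 - 2 * s) :
    reflectAt p (n + 3 - 2 * s) ∈ admissible n (n + 4 - s) ∧
      reflectAt (reflectAt p (n + 3 - 2 * s)) (2 * s - n - 5) = p := by
  have hle := firstHit_neg_one_le_firstHit hs hp hL hR
  have hpend := (mem_admissible_iff_pathPos.1 hp).2.2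
  refine ⟨reflectAt_mem_admissible hp hL hR hle (by omega) (by omega),
    reflectAt_reflectAt hL hR hle (by ring) fun u hu => ?_⟩
  have := nonneg_of_lt_firstHit_neg_one hu
  omega

lemma reflectAt_crossing_of_mem_admissible (hs : 3 * s ≤ n + 3)
    (hq : q ∈ admissible n (n + 4 - s)) :
    (reflectAt q (2 * s - n - 5) ∈ admissible n s ∧
      (∃ t, pathPos (reflectAt q (2 * s - n - 5)) t = -1) ∧
      ∃ t, pathPos (reflectAt q (2 * s - n - 5)) t = n + 3 - 2 * s) ∧
      reflectAt (reflectAt q (2 * s - n - 5)) (n + 3 - 2 * s) = q := by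
  have hqend := (mem_admissible_iff_pathPos.1 hq).2.2
  push_cast [show s ≤ n + 4 by omega] at hqend
  have hL : ∃ t, pathPos q t = -1 :=
    (exists_le_pathPos_eq q (by norm_num) (v := n + 2) (by omega)).imp fun _ => And.right
  have hc : ∃ t, pathPos q t = 2 * s - n - 5 :=
    (exists_le_pathPos_eq q (by omega) (v := n + 2) (by omega)).imp fun _ => And.right
  have hle : firstHit q (-1) ≤ firstHit q (2 * s - n - 5) :=
    firstHit_le_of_pathPos_le (by norm_num) (by rw [pathPos_firstHit hc]; omega)
  -- a walk with `s - 2` right steps never climbs above `s - 2 < n + 3 - 2s`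
  have hbound (t : ℕ) : pathPos q t ≤ s - 2 := by
    have := pathPos_sub_pathPos_le_card_false q (le_max_left t (n + 2))
    rw [pathPos_of_le q (le_max_right t (n + 2)), (mem_admissible.1 hq).2.2] at this
    omega
  refine ⟨⟨reflectAt_mem_admissible hq hL hc hle (by omega) (by omega),
    ⟨_, pathPos_reflectAt_firstHit_neg_one hL hle⟩,
    ⟨_, pathPos_reflectAt_firstHit hL hc hle (by ring)⟩⟩,
    reflectAt_reflectAt hL hc hle (by ring) fun u _ => ?_⟩
  have := hbound u
  omega

end Crossing

lemma binom_sub_four {n s : ℕ} (hs : s ≤ n + 4) :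
    binom n ((s : ℤ) - 4) = n.choose (n + 4 - s) := by
  rcases lt_or_ge s 4 with h4 | h4
  · rw [binom, if_pos (by omega), Nat.choose_eq_zero_of_lt (by omega)]
  · rw [binom, if_neg (by omega), show n + 4 - s = n - (s - 4) by omega,
      Nat.choose_symm (by omega)]
    congr 1
    omega

/-- for `s ≤ ⌊n/3⌋ + 1`, the number of generally admissible paths of size
`(n,s)` crossing both `x = 0` and `x = n+2-2s` equals `C(n, s-4)` (zero for `s < 4`). -/
theorem stmt10 (n s : ℕ) (h : s ≤ n / 3 + 1) :
    ((admissible n s).filter (fun p => crossesLeft p ∧ crossesRight n s p)).card =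
      binom n ((s : ℤ) - 4) := by
  have hs : 3 * s ≤ n + 3 := by omega
  simp only [crossesLeft, crossesRight, exists_mem_range_pathPos_eq_iff]
  rw [binom_sub_four (by omega), ← card_admissible]
  refine card_bij' (fun p _ => reflectAt p (n + 3 - 2 * s))
    (fun q _ => reflectAt q (2 * s - n - 5)) (fun p hp => ?_) (fun q hq => ?_)
    (fun p hp => ?_) (fun q hq => (reflectAt_crossing_of_mem_admissible hs hq).2)
  · obtain ⟨hp, hL, hR⟩ := mem_filter.1 hp
    exact (reflectAt_mem_admissible_of_crossing hs hp hL hR).1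
  · exact mem_filter.2 (reflectAt_crossing_of_mem_admissible hs hq).1
  · obtain ⟨hp, hL, hR⟩ := mem_filter.1 hp
    exact (reflectAt_mem_admissible_of_crossing hs hp hL hR).2
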